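/- arXiv:1204.4252 — 3 statements merged into one kernel-verified Lean document; each statement's English description precedes it below -/
import Mathlib

section
/- For any two vertices u and v of Q_n lying in different parts of the bipartition (i.e., at odd distance), there exists a Hamiltonian u–v path in Q_n. -/
def cube (n : ℕ) : SimpleGraph (Fin n → Bool) where
  Adj u v := (Finset.univ.filter fun i => u i ≠ v i).card = 1
  symm := by constructor; intro u v h; simpa [ne_comm] using h
  loopless := by constructor; intro u h; simp at h

instance (n : ℕ) : DecidableRel (cube n).Adj := fun u v =>
  inferInstanceAs (Decidable (_ = 1))

def onesCount {n : ℕ} (u : Fin n → Bool) : ℕ :=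
  (Finset.univ.filter fun i => u i = true).card

/-! Induction on `n`, viewing `Q (n + 1)` as two copies `{x | x 0 = c}` of `Q n` joined by a
perfect matching. After permuting coordinates we may assume `u 0 ≠ v 0`, so that the tails
`a`, `b` of `u`, `v` lie in the same class of `Q n`. A neighbour `w` of `a` lies in the other
class, so by induction there are Hamiltonian paths `a → w` in the copy containing `u` and
`w → b` in the copy containing `v`, and the matching edge between the two copies of `w` joins
them. -/

open SimpleGraph
open scoped Finset

lemma SimpleGraph.Iso.exists_isHamiltonian_walk {V W : Type*} [DecidableEq V] [DecidableEq W]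
    {G : SimpleGraph V} {G' : SimpleGraph W} (e : G ≃g G') {a b : W}
    (h : ∃ p : G.Walk (e.symm a) (e.symm b), p.IsHamiltonian) :
    ∃ q : G'.Walk a b, q.IsHamiltonian := by
  obtain ⟨p, hp⟩ := h
  refine ⟨(p.map e.toHom).copy (e.apply_symm_apply a) (e.apply_symm_apply b), fun x => ?_⟩
  rw [Walk.support_copy]
  exact hp.map _ e.bijective x

section

variable {n : ℕ}

lemma onesCount_comp_perm (x : Fin n → Bool) (σ : Equiv.Perm (Fin n)) :
    onesCount (x ∘ σ) = onesCount x :=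
  Finset.card_equiv σ (by simp)

lemma onesCount_cons (c : Bool) (a : Fin n → Bool) :
    onesCount (Fin.cons c a : Fin (n + 1) → Bool) = c.toNat + onesCount a := by
  rw [onesCount, onesCount, Finset.card_filter, Finset.card_filter, Fin.sum_univ_succ]
  cases c <;> simp

lemma even_onesCount_cons_iff_of_ne {c d : Bool} (hcd : c ≠ d) (a b : Fin n → Bool) :
    (Even (onesCount (Fin.cons c a : Fin (n + 1) → Bool)) ↔
        Even (onesCount (Fin.cons d b : Fin (n + 1) → Bool))) ↔
      ¬ (Even (onesCount a) ↔ Even (onesCount b)) := by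
  cases c <;> cases d <;> simp_all [onesCount_cons] <;> grind

def cubePermIso (σ : Equiv.Perm (Fin n)) : cube n ≃g cube n where
  toEquiv := σ.arrowCongr (Equiv.refl Bool)
  map_rel_iff' {x y} := by
    change #{i | x (σ.symm i) ≠ y (σ.symm i)} = 1 ↔ #{i | x i ≠ y i} = 1
    rw [Finset.card_equiv σ.symm (t := {i | x i ≠ y i}) (by simp)]

@[simp]
lemma cubePermIso_symm_apply (σ : Equiv.Perm (Fin n)) (x : Fin n → Bool) :
    (cubePermIso σ).symm x = x ∘ σ :=
  rfl

@[simps]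
def cubeCons (c : Bool) : cube n →g cube (n + 1) where
  toFun a := Fin.cons c a
  map_rel' {a b} h := by
    change #{i | _ ≠ _} = 1
    rwa [Finset.card_filter, Fin.sum_univ_succ, Fin.cons_zero, Fin.cons_zero, if_neg (by simp),
      zero_add, ← Finset.card_filter]

lemma cube_adj_cubeCons_of_ne {c d : Bool} (hcd : c ≠ d) (a : Fin n → Bool) :
    (cube (n + 1)).Adj (cubeCons c a) (cubeCons d a) := by
  change #{i | _ ≠ _} = 1
  rw [Finset.card_eq_one]
  refine ⟨0, Finset.ext fun i => ?_⟩
  cases i using Fin.cases <;> simp [hcd]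

lemma cubeCons_injective (c : Bool) : Function.Injective (cubeCons (n := n) c) :=
  Fin.cons_right_injective (α := fun _ => Bool) c

lemma count_map_cubeCons (c d : Bool) (t : Fin n → Bool) (l : List (Fin n → Bool)) :
    (l.map (cubeCons d)).count (Fin.cons c t) = if c = d then l.count t else 0 := by
  split_ifs with h
  · subst h
    exact List.count_map_of_injective _ _ (cubeCons_injective c) t
  · refine List.count_eq_zero.2 fun hmem => ?_
    obtain ⟨s, -, hs⟩ := List.mem_map.1 hmem
    exact h (by simpa using (congrFun hs 0).symm)

lemma isHamiltonian_append_cons_map_cubeCons {c d : Bool} (hcd : c ≠ d) {a w b : Fin n → Bool}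
    {p₁ : (cube n).Walk a w} {p₂ : (cube n).Walk w b} (h₁ : p₁.IsHamiltonian)
    (h₂ : p₂.IsHamiltonian) :
    ((p₁.map (cubeCons c)).append
      (.cons (cube_adj_cubeCons_of_ne hcd w) (p₂.map (cubeCons d)))).IsHamiltonian := by
  intro x
  obtain ⟨e, t, rfl⟩ : ∃ e t, (Fin.cons e t : Fin (n + 1) → Bool) = x :=
    ⟨_, _, Fin.cons_self_tail x⟩
  rw [Walk.support_append, Walk.support_cons, List.tail_cons, List.count_append,
    Walk.support_map, Walk.support_map, count_map_cubeCons, count_map_cubeCons, h₁, h₂]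
  cases c <;> cases d <;> cases e <;> simp_all

end

def CubeLaceable (n : ℕ) : Prop :=
  ∀ u v : Fin n → Bool, ¬ (Even (onesCount u) ↔ Even (onesCount v)) →
    ∃ p : (cube n).Walk u v, p.IsHamiltonian

lemma cubeLaceable_one : CubeLaceable 1 := by
  intro u v h
  obtain ⟨c, a, rfl⟩ : ∃ c a, cubeCons c a = u := ⟨_, _, Fin.cons_self_tail u⟩
  obtain ⟨d, b, rfl⟩ : ∃ d b, cubeCons d b = v := ⟨_, _, Fin.cons_self_tail v⟩
  obtain rfl : a = b := Subsingleton.elim a b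
  have hcd : c ≠ d := by rintro rfl; exact h Iff.rfl
  refine ⟨.cons (cube_adj_cubeCons_of_ne hcd a) .nil,
    Walk.isHamiltonian_iff_isPath_and_length_eq.2 ⟨?_, ?_⟩⟩
  · simpa using (cube_adj_cubeCons_of_ne hcd a).ne
  · simp

section

variable {n : ℕ}

lemma CubeLaceable.exists_isHamiltonian_of_head_ne (ih : CubeLaceable (n + 1))
    {u v : Fin (n + 2) → Bool} (h : ¬ (Even (onesCount u) ↔ Even (onesCount v)))
    (h0 : u 0 ≠ v 0) : ∃ p : (cube (n + 2)).Walk u v, p.IsHamiltonian := by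
  obtain ⟨c, a, rfl⟩ : ∃ c a, cubeCons c a = u := ⟨_, _, Fin.cons_self_tail u⟩
  obtain ⟨d, b, rfl⟩ : ∃ d b, cubeCons d b = v := ⟨_, _, Fin.cons_self_tail v⟩
  have hcd : c ≠ d := by simpa using h0
  have hab : Even (onesCount a) ↔ Even (onesCount b) :=
    not_not.1 ((even_onesCount_cons_iff_of_ne hcd a b).not.1 h)
  obtain ⟨e, t, rfl⟩ : ∃ e t, cubeCons e t = a := ⟨_, _, Fin.cons_self_tail a⟩
  have haw : ¬ (Even (onesCount (cubeCons e t)) ↔ Even (onesCount (cubeCons (!e) t))) :=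
    fun h' => (even_onesCount_cons_iff_of_ne (Bool.not_ne_self e).symm t t).1 h' Iff.rfl
  obtain ⟨p₁, h₁⟩ := ih _ _ haw
  obtain ⟨p₂, h₂⟩ := ih (cubeCons (!e) t) b (by tauto)
  exact ⟨_, isHamiltonian_append_cons_map_cubeCons hcd h₁ h₂⟩

lemma CubeLaceable.succ (ih : CubeLaceable (n + 1)) : CubeLaceable (n + 2) := by
  intro u v h
  obtain ⟨i, hi⟩ := Function.ne_iff.1 fun huv : u = v => h (huv ▸ Iff.rfl)
  apply SimpleGraph.Iso.exists_isHamiltonian_walk (cubePermIso (Equiv.swap 0 i))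
  apply ih.exists_isHamiltonian_of_head_ne
  · simpa [onesCount_comp_perm] using h
  · simpa using hi

end

theorem cubeLaceable : ∀ n, CubeLaceable (n + 1)
  | 0 => cubeLaceable_one
  | n + 1 => (cubeLaceable n).succ

/-- For any two vertices in different parts of the bipartition of Q_n (n ≥ 1),
there is a Hamiltonian path between them. -/
theorem cube_hamiltonian_path (n : ℕ) (hn : 1 ≤ n) (u v : Fin n → Bool)
    (h : ¬ (Even (onesCount u) ↔ Even (onesCount v))) :
    ∃ p : (cube n).Walk u v, p.IsPath ∧ ∀ w, w ∈ p.support := by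
  obtain ⟨m, rfl⟩ := Nat.exists_eq_add_of_le' hn
  obtain ⟨p, hp⟩ := cubeLaceable m u v h
  exact ⟨p, hp.isPath, hp.mem_support⟩
end

section
/- Let n ≥ 5, 2 ≤ k ≤ n − 3, and split Q_n = L ⊙ R along one coordinate. Let F be a set of vertices with |F| ≤ 2n − 2k − 3, let S and T be k-sets of fault-free vertices with S ⊆ X and T ⊆ Y (the two bipartition classes), and set p = |S ∩ L|, q = |T ∩ L|. If p > q, then there exist p − q fault-free vertices u_1, …, u_{p−q} ∈ Y ∩ V(L) \ T whose neighbors v_1, …, v_{p−q} in R are fault-free and lie in X ∩ V(R) \ S. -/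
/-!
The odd vertices of `L` are `2 ^ (n - 2)` in number. Such a vertex `u` is unusable only if
`u ∈ T`, or `u` or its neighbour in `R` lies in `F`, or that neighbour lies in `S`; sending every
culprit to its projection in `L` bounds the unusable ones by `q + |F| + (k - p)`, and
`2 ^ (n - 2) ≥ 2 (n - 2)` leaves room for `p - q` usable ones.
-/

open Finset

theorem two_mul_card_filter_eq_card_of_involution {α : Type*} (s : Finset α) (P : α → Prop)
    [DecidablePred P] (f : α → α) (hf : Set.MapsTo f s s) (hff : Set.LeftInvOn f f s)
    (hP : ∀ x ∈ s, P (f x) ↔ ¬P x) :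
    2 * #{x ∈ s | P x} = #s := by
  rw [two_mul, ← card_filter_add_card_filter_not (s := s) P]
  congr 1
  refine card_nbij' f f (fun x hx => ?_) (fun x hx => ?_)
    (hff.mono (coe_subset.2 (filter_subset P s)))
    (hff.mono (coe_subset.2 (filter_subset (fun x => ¬P x) s)))
  · simp only [coe_filter, Set.mem_ofPred_eq] at hx ⊢
    exact ⟨hf hx.1, (hP x hx.1).not.2 (not_not.2 hx.2)⟩
  · simp only [coe_filter, Set.mem_ofPred_eq] at hx ⊢
    exact ⟨hf hx.1, (hP x hx.1).2 hx.2⟩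

theorem two_mul_le_two_pow (m : ℕ) : 2 * m ≤ 2 ^ m := by
  rcases m with _ | m
  · simp
  · have := m.lt_two_pow_self
    rw [pow_succ]
    omega

section Cube

variable {n : ℕ}

theorem onesCount_update_true_of_eq_false {w : Fin n → Bool} {i : Fin n} (h : w i = false) :
    onesCount (Function.update w i true) = onesCount w + 1 := by
  have : univ.filter (fun k => Function.update w i true k = true) =
      insert i (univ.filter fun k => w k = true) := by
    ext k
    by_cases hk : k = i <;> simp [hk]
  rw [onesCount, onesCount, this, card_insert_of_notMem (by simp [h])]

theorem even_onesCount_update_not (w : Fin n → Bool) (i : Fin n) :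
    Even (onesCount (Function.update w i (!w i))) ↔ ¬Even (onesCount w) := by
  cases hw : w i
  · rw [Bool.not_false, onesCount_update_true_of_eq_false hw, Nat.even_add_one]
  · have hv : Function.update w i false i = false := Function.update_self ..
    have := onesCount_update_true_of_eq_false hv
    rw [Function.update_idem, Function.update_eq_self_iff.2 hw.symm] at this
    rw [Bool.not_true, this, Nat.even_add_one, not_not]

theorem two_mul_card_filter_apply_eq_false (j : Fin n) :
    2 * #{w : Fin n → Bool | w j = false} = 2 ^ n := by
  rw [two_mul_card_filter_eq_card_of_involution _ _ (fun w => Function.update w j (!w j))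
    (fun _ _ => mem_coe.2 (mem_univ _)) (fun w _ => by simp) (fun w _ => by simp)]
  simp

def leftOddVertices (j : Fin n) : Finset (Fin n → Bool) :=
  {w | w j = false ∧ ¬Even (onesCount w)}

theorem card_leftOddVertices (hn : 2 ≤ n) (j : Fin n) :
    #(leftOddVertices j) = 2 ^ (n - 2) := by
  have : Nontrivial (Fin n) := Fin.nontrivial_iff_two_le.2 hn
  obtain ⟨j', hj'⟩ := exists_ne j
  have hodd := two_mul_card_filter_eq_card_of_involution {w : Fin n → Bool | w j = false}
    (fun w => ¬Even (onesCount w)) (fun w => Function.update w j' (!w j'))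
    (fun w hw => by simpa [Function.update_of_ne hj'.symm] using hw)
    (fun w _ => by simp) (fun w _ => by rw [even_onesCount_update_not])
  rw [filter_filter] at hodd
  rw [leftOddVertices]
  have hhalf := two_mul_card_filter_apply_eq_false j
  have hpow : 2 ^ n = 2 ^ (n - 2) * 2 ^ 2 := by rw [← pow_add, Nat.sub_add_cancel hn]
  omega

variable (j : Fin n) (F S T : Finset (Fin n → Bool))

def linkingObstructions : Finset (Fin n → Bool) :=
  {t ∈ T | t j = false} ∪ (F ∪ {s ∈ S | s j = true}).image (Function.update · j false)

def linkingCandidates : Finset (Fin n → Bool) :=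
  leftOddVertices j \ linkingObstructions j F S T

theorem card_linkingObstructions_le :
    #(linkingObstructions j F S T) ≤ #{t ∈ T | t j = false} + (#F + #{s ∈ S | s j = true}) :=
  (card_union_le _ _).trans <| Nat.add_le_add_left (card_image_le.trans (card_union_le _ _)) _

theorem properties_of_mem_linkingCandidates {w : Fin n → Bool}
    (hw : w ∈ linkingCandidates j F S T) :
    w j = false ∧ ¬Even (onesCount w) ∧ w ∉ T ∧ w ∉ F ∧
      Function.update w j true ∉ F ∧ Function.update w j true ∉ S ∧
      Even (onesCount (Function.update w j true)) := by
  simp only [linkingCandidates, leftOddVertices, linkingObstructions, mem_sdiff, mem_filter,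
    mem_univ, true_and, mem_union, mem_image, not_or, not_exists, not_and] at hw
  obtain ⟨⟨hwj, hodd⟩, hT, hFS⟩ := hw
  have hw_update : Function.update w j false = w := Function.update_eq_self_iff.2 hwj.symm
  have hback : Function.update (Function.update w j true) j false = w := by
    rw [Function.update_idem, hw_update]
  refine ⟨hwj, hodd, fun h => hT h hwj, fun h => hFS w (.inl h) hw_update,
    fun h => hFS _ (.inl h) hback,
    fun h => hFS _ (.inr ⟨h, Function.update_self ..⟩) hback, ?_⟩
  rw [onesCount_update_true_of_eq_false hwj, Nat.even_add_one]
  exact hodd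

end Cube

theorem cube_linking_vertices_general (n k : ℕ) (hn : 5 ≤ n) (hk2 : k ≤ n - 3)
    (j : Fin n) (F : Finset (Fin n → Bool)) (hF : F.card ≤ 2 * n - 2 * k - 3)
    (S T : Finset (Fin n → Bool)) (hS : S.card = k) (hT : T.card = k)
    (p q : ℕ) (hp : p = (S.filter fun s => s j = false).card)
    (hq : q = (T.filter fun t => t j = false).card) :
    ∃ u : Fin (p - q) → Fin n → Bool,
      Function.Injective u ∧
      ∀ i, u i j = false ∧ ¬ Even (onesCount (u i)) ∧ u i ∉ T ∧ u i ∉ F ∧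
        Function.update (u i) j true ∉ F ∧ Function.update (u i) j true ∉ S ∧
        Even (onesCount (Function.update (u i) j true)) := by
  have hSR : p + #{s ∈ S | s j = true} = k := by
    simpa only [hp, hS, Bool.not_eq_false] using
      card_filter_add_card_filter_not (s := S) (· j = false)
  have hqk : q ≤ k := hq ▸ hT ▸ card_filter_le _ _
  have hcount : p - q ≤ #(linkingCandidates j F S T) :=
    calc p - q ≤ 2 ^ (n - 2) - (q + (#F + (k - p))) := by
          have := two_mul_le_two_pow (n - 2)
          omega
      _ ≤ #(leftOddVertices j) - #(linkingObstructions j F S T) := by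
          have := card_linkingObstructions_le j F S T
          rw [card_leftOddVertices (by omega) j]
          omega
      _ ≤ #(linkingCandidates j F S T) := le_card_sdiff _ _
  obtain ⟨u, hu⟩ := Function.Embedding.exists_of_card_le_finset
    ((Fintype.card_fin _).trans_le hcount)
  exact ⟨u, u.injective, fun i => properties_of_mem_linkingCandidates j F S T (hu ⟨i, rfl⟩)⟩

/-- Existence of the linking vertices u_1, …, u_{p−q} in L with fault-free
neighbors in R (the counting argument of Case 2). -/
theorem cube_linking_vertices (n k : ℕ) (hn : 5 ≤ n) (hk1 : 2 ≤ k) (hk2 : k ≤ n - 3)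
    (j : Fin n) (F : Finset (Fin n → Bool)) (hF : F.card ≤ 2 * n - 2 * k - 3)
    (S T : Finset (Fin n → Bool)) (hS : S.card = k) (hT : T.card = k)
    (hSF : ∀ s ∈ S, s ∉ F) (hTF : ∀ t ∈ T, t ∉ F)
    (hSX : ∀ s ∈ S, Even (onesCount s)) (hTY : ∀ t ∈ T, ¬ Even (onesCount t))
    (p q : ℕ) (hp : p = (S.filter fun s => s j = false).card)
    (hq : q = (T.filter fun t => t j = false).card) (hpq : q < p) :
    ∃ u : Fin (p - q) → Fin n → Bool,
      Function.Injective u ∧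
      ∀ i, u i j = false ∧ ¬ Even (onesCount (u i)) ∧ u i ∉ T ∧ u i ∉ F ∧
        Function.update (u i) j true ∉ F ∧ Function.update (u i) j true ∉ S ∧
        Even (onesCount (Function.update (u i) j true)) :=
  cube_linking_vertices_general n k hn hk2 j F hF S T hS hT p q hp hq
end

section
/- Let x, y be adjacent vertices of Q_3 and let u, v be vertices of Q_3 − {x, y} with d(u,v) = 1 and d({x,y},{u,v}) = 2. Then there is no u–v path containing all six vertices of Q_3 − {x, y}. -/
/-! The only vertices at distance at least two from both ends of the edge `xy` are the antipodes
`x̄` and `ȳ`; by symmetry `u = ȳ`. The two neighbours of `ȳ` other than `x̄` are also adjacent to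
`x`, so once `x` is deleted each of them has only two neighbours left, one of them `ȳ`. A path
through all six vertices passes through both of them (neither is `v`, which is not adjacent to `x`),
so it uses both edges at each, and the endpoint `ȳ` would have two neighbours on the path. -/

namespace SimpleGraph.Walk.IsPath

variable {V : Type*} {G : SimpleGraph V} {u v w : V} {p : G.Walk u v}

lemma ncard_neighborSet_toSubgraph_eq_two (hp : p.IsPath) (hw : w ∈ p.support) (hwu : w ≠ u)
    (hwv : w ≠ v) : (p.toSubgraph.neighborSet w).ncard = 2 := by
  obtain ⟨i, rfl, hi⟩ := mem_support_iff_exists_getVert.mp hw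
  refine hp.ncard_neighborSet_toSubgraph_internal_eq_two ?_ ?_
  · rintro rfl
    exact hwu p.getVert_zero
  · exact hi.lt_of_ne fun h => hwv (h ▸ p.getVert_length)

lemma toSubgraph_adj_of_degree_le_three [G.LocallyFinite] (hp : p.IsPath) (hw : w ∈ p.support)
    (hwu : w ≠ u) (hwv : w ≠ v) {x : V} (hx : x ∉ p.support) (hwx : G.Adj w x)
    (hdeg : G.degree w ≤ 3) {a : V} (hwa : G.Adj w a) (ha : a ∈ p.support) :
    p.toSubgraph.Adj w a := by
  classical
  set S := {z | G.Adj w z ∧ z ∈ p.support}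
  have hS : S ⊆ ↑((G.neighborFinset w).erase x) := fun z hz => by
    simpa using ⟨hz.1, fun h : z = x => hx (h ▸ hz.2)⟩
  have hS_ncard : S.ncard ≤ 2 := by
    refine (Set.ncard_le_ncard hS (Finset.finite_toSet _)).trans ?_
    rw [Set.ncard_coe_finset, Finset.card_erase_of_mem (by simpa using hwx),
      card_neighborFinset_eq_degree]
    omega
  have hsub : p.toSubgraph.neighborSet w ⊆ S := fun z hz =>
    ⟨hz.adj_sub, p.mem_verts_toSubgraph.mp hz.snd_mem⟩
  have hS_fin : S.Finite := p.support.finite_toSet.subset fun z hz => hz.2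
  have heq := Set.eq_of_subset_of_ncard_le hsub
    (hS_ncard.trans (hp.ncard_neighborSet_toSubgraph_eq_two hw hwu hwv).ge) hS_fin
  exact (heq ▸ (⟨hwa, ha⟩ : a ∈ S) : a ∈ p.toSubgraph.neighborSet w)

end SimpleGraph.Walk.IsPath

open SimpleGraph

lemma cube_adj_iff {n : ℕ} {u v : Fin n → Bool} :
    (cube n).Adj u v ↔ ∃ i, v = Function.update u i (!u i) := by
  refine ⟨fun h => ?_, ?_⟩
  · obtain ⟨i, hi⟩ := Finset.card_eq_one.mp h
    refine ⟨i, funext fun j => ?_⟩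
    have hj : u j ≠ v j ↔ j = i := by simpa using Finset.ext_iff.mp hi j
    by_cases hji : j = i
    · subst hji
      have := hj.mpr rfl
      cases h : u j <;> simp_all
    · simpa [hji] using (not_not.mp (mt hj.mp hji)).symm
  · rintro ⟨i, rfl⟩
    refine Finset.card_eq_one.mpr ⟨i, Finset.ext fun j => ?_⟩
    by_cases hji : j = i <;> simp [hji]

lemma cube_degree {n : ℕ} (u : Fin n → Bool) : (cube n).degree u = n := by
  have himage : (cube n).neighborFinset u =
      Finset.univ.image fun i => Function.update u i (!u i) := by
    ext v
    simp [cube_adj_iff, eq_comm]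
  have hinj : Function.Injective fun i => Function.update u i (!u i) := by
    intro i j hij
    by_contra hne
    have := congrFun hij i
    simp [Function.update_of_ne hne] at this
  rw [← card_neighborFinset_eq_degree, himage, Finset.card_image_of_injective _ hinj,
    Finset.card_univ, Fintype.card_fin]

/- `d(x, u)` and `d(y, u)` are both at least two and have opposite parity, so one of them is three. -/
set_option synthInstance.maxSize 2000 in
lemma cube_three_eq_compl_of_not_adj {x y u : Fin 3 → Bool} (hxy : (cube 3).Adj x y)
    (hux : u ≠ x) (huy : u ≠ y) (hxu : ¬ (cube 3).Adj x u) (hyu : ¬ (cube 3).Adj y u) :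
    (u = fun i => !x i) ∨ (u = fun i => !y i) := by
  revert x y u
  decide

set_option synthInstance.maxSize 2000 in
lemma cube_three_exists_common_neighbors_compl {x y : Fin 3 → Bool} (hxy : (cube 3).Adj x y) :
    ∃ w₁ w₂, w₁ ≠ w₂ ∧ w₁ ≠ y ∧ w₂ ≠ y ∧ (cube 3).Adj x w₁ ∧ (cube 3).Adj x w₂ ∧
      (cube 3).Adj (fun i => !y i) w₁ ∧ (cube 3).Adj (fun i => !y i) w₂ := by
  revert x y
  decide

lemma cube_three_not_isPath_spanning_of_start_compl {x y v : Fin 3 → Bool}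
    (hxy : (cube 3).Adj x y) (hxv : ¬ (cube 3).Adj x v) (p : (cube 3).Walk (fun i => !y i) v)
    (hp : p.IsPath) (hx : x ∉ p.support) (hall : ∀ w, w ≠ x → w ≠ y → w ∈ p.support) :
    False := by
  have hsnd : ∀ w, w ≠ y → (cube 3).Adj x w → (cube 3).Adj (fun i => !y i) w → p.snd = w := by
    intro w hwy hxw hyw
    have hwv : w ≠ v := fun h => hxv (h ▸ hxw)
    have hpath_adj : p.toSubgraph.Adj w (fun i => !y i) :=
      hp.toSubgraph_adj_of_degree_le_three (hall w hxw.ne.symm hwy) hyw.ne.symm hwv hx hxw.symm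
        (cube_degree w).le hyw.symm p.start_mem_support
    exact hp.snd_of_toSubgraph_adj hpath_adj.symm
  obtain ⟨w₁, w₂, hne, hy₁, hy₂, hx₁, hx₂, h₁, h₂⟩ := cube_three_exists_common_neighbors_compl hxy
  exact hne ((hsnd w₁ hy₁ hx₁ h₁).symm.trans (hsnd w₂ hy₂ hx₂ h₂))

theorem cube_dvorak_exception_general (x y u v : Fin 3 → Bool)
    (hxy : (cube 3).Adj x y)
    (hd : min (min ((cube 3).dist x u) ((cube 3).dist x v))
          (min ((cube 3).dist y u) ((cube 3).dist y v)) = 2) :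
    ¬ ∃ p : (cube 3).Walk u v, p.IsPath ∧ x ∉ p.support ∧ y ∉ p.support ∧
        ∀ w, w ≠ x → w ≠ y → w ∈ p.support := by
  rintro ⟨p, hp, hx, hy, hall⟩
  have not_adj : ∀ {a b}, 2 ≤ (cube 3).dist a b → ¬ (cube 3).Adj a b := fun h hab => by
    rw [dist_eq_one_iff_adj.mpr hab] at h
    omega
  have hux : u ≠ x := fun h => hx (h ▸ p.start_mem_support)
  have huy : u ≠ y := fun h => hy (h ▸ p.start_mem_support)
  rcases cube_three_eq_compl_of_not_adj hxy hux huy (not_adj (by omega)) (not_adj (by omega))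
    with rfl | rfl
  · exact cube_three_not_isPath_spanning_of_start_compl hxy.symm (not_adj (by omega)) p hp hy
      fun w hwy hwx => hall w hwx hwy
  · exact cube_three_not_isPath_spanning_of_start_compl hxy (not_adj (by omega)) p hp hx hall

/-- The exceptional case of Dvořák's lemma in Q_3: if x, y are adjacent, u, v avoid
{x, y}, d(u,v) = 1 and d({x,y},{u,v}) = 2, then no u–v path covers all six
vertices of Q_3 − {x, y}. -/
theorem cube_dvorak_exception (x y u v : Fin 3 → Bool)
    (hxy : (cube 3).Adj x y)
    (hu : u ≠ x ∧ u ≠ y) (hv : v ≠ x ∧ v ≠ y)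
    (huv : (cube 3).dist u v = 1)
    (hd : min (min ((cube 3).dist x u) ((cube 3).dist x v))
          (min ((cube 3).dist y u) ((cube 3).dist y v)) = 2) :
    ¬ ∃ p : (cube 3).Walk u v, p.IsPath ∧ x ∉ p.support ∧ y ∉ p.support ∧
        ∀ w, w ≠ x → w ≠ y → w ∈ p.support :=
  cube_dvorak_exception_general x y u v hxy hd
end
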